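/- The derivative of the Lehmer transform is given by $\mathscr{L}'(\breve{s}) = \left[\sum_{i=1}^{n}\sum_{k=i+1}^{n} (h_i - h_k)(\log h_i - \log h_k)(h_i h_k)^{\breve{s}-1}\right] \Big/ \left(\sum_{i=1}^{n} h_i^{\breve{s}-1}\right)^{2}$ for every $\breve{s} \in \mathbb{R}$. -/

import Mathlib

/-!
Write `w i = h i ^ (s - 1)`, so that numerator and denominator of the Lehmer transform are
`∑ w i * h i` and `∑ w i`, and differentiating `h i ^ t` in `t` multiplies it by `log (h i)`.
The quotient rule then leaves `(∑ w h log h)(∑ w) - (∑ w h)(∑ w log h)` over the squared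
denominator, and this covariance-type expression is the pairwise sum
`∑_{i<k} (h i - h k)(log h i - log h k) w i w k` by a Lagrange-type identity.
-/

open Finset Real

section PairwiseSums

variable {ι R : Type*} [Fintype ι] [LinearOrder ι] [LocallyFiniteOrderTop ι]
  [LocallyFiniteOrderBot ι]

theorem sum_sum_Ioi_add_eq_sum_sum [AddCommMonoid R] (F : ι → ι → R) (hF : ∀ i, F i i = 0) :
    ∑ i, ∑ k ∈ Ioi i, (F i k + F k i) = ∑ i, ∑ k, F i k := by
  rw [sum_sum_Ioi_add_eq_sum_sum_off_diag (fun k i => F i k)]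
  refine sum_congr rfl fun i _ => ?_
  rw [← add_sum_erase _ _ (mem_univ i), hF, zero_add, compl_eq_univ_sdiff,
    sdiff_singleton_eq_erase]

theorem sum_mul_mul_mul_sum_sub_mul_sum_mul [CommRing R] (w u v : ι → R) :
    (∑ i, w i * u i * v i) * (∑ i, w i) - (∑ i, w i * u i) * (∑ i, w i * v i) =
      ∑ i, ∑ k ∈ Ioi i, (u i - u k) * (v i - v k) * (w i * w k) := by
  calc
    _ = ∑ i, ∑ k, w i * w k * u i * (v i - v k) := by
      simp only [sum_mul_sum, ← sum_sub_distrib]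
      exact sum_congr rfl fun i _ => sum_congr rfl fun k _ => by ring
    _ = _ := by
      rw [← sum_sum_Ioi_add_eq_sum_sum _ (by simp)]
      exact sum_congr rfl fun i _ => sum_congr rfl fun k _ => by ring

end PairwiseSums

theorem hasDerivAt_sum_rpow {ι : Type*} [Fintype ι] {h : ι → ℝ} (hpos : ∀ i, 0 < h i)
    (x : ℝ) :
    HasDerivAt (fun t => ∑ i, h i ^ t) (∑ i, h i ^ x * log (h i)) x :=
  HasDerivAt.fun_sum fun i _ => (hasStrictDerivAt_const_rpow (hpos i) x).hasDerivAt

theorem lehmer_hasDerivAt (n : ℕ) (hn : 1 ≤ n) (h : Fin n → ℝ)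
    (hpos : ∀ i, 0 < h i) (s : ℝ) :
    HasDerivAt (fun t : ℝ => (∑ i : Fin n, h i ^ t) / (∑ i : Fin n, h i ^ (t - 1)))
      ((∑ i : Fin n, ∑ k ∈ Finset.Ioi i,
          (h i - h k) * (Real.log (h i) - Real.log (h k)) * (h i * h k) ^ (s - 1)) /
        (∑ i : Fin n, h i ^ (s - 1)) ^ 2) s := by
  have : Nonempty (Fin n) := Fin.pos_iff_nonempty.mp hn
  set w : Fin n → ℝ := fun i => h i ^ (s - 1)
  have hw_mul : ∀ i, h i ^ s = w i * h i := fun i => by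
    rw [← rpow_add_one (hpos i).ne', sub_add_cancel]
  have hden_ne : ∑ i, w i ≠ 0 :=
    (sum_pos (fun i _ => rpow_pos_of_pos (hpos i) _) univ_nonempty).ne'
  have hnum := hasDerivAt_sum_rpow hpos s
  have hden := (hasDerivAt_sum_rpow hpos (s - 1)).comp_sub_const s 1
  refine (hnum.div hden hden_ne).congr_deriv (congrArg (· / _) ?_)
  simp only [hw_mul, mul_rpow (hpos _).le (hpos _).le]
  exact sum_mul_mul_mul_sum_sub_mul_sum_mul w h (fun i => log (h i))
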